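/- Let N ≥ 3 be an integer and 0 < a < 1. For every x ∈ ℝ^N with a < |x| < 1 and every y ∈ ℝ^N with a ≤ |y| ≤ 1, the series Σ_{m=1}^∞ [A_m(|x|)·|y|^m + B_m(|x|)·|y|^{−(m+N−2)}] · Z_m(x/|x|, y/|y|) converges absolutely; in particular the regular part H_a(x, y) is well defined. -/

import Mathlib

open scoped BigOperators
open MeasureTheory

/-- Surface area of the unit sphere `S^{N-1} ⊆ ℝ^N`, via the `(N-1)`-dimensional
Hausdorff measure. -/
noncomputable def sphereArea (N : ℕ) : ℝ :=
  (μH[(N : ℝ) - 1] (Metric.sphere (0 : EuclideanSpace ℝ (Fin N)) 1)).toReal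

/-- The zonal harmonic of degree `m` on `ℝ^N`. -/
noncomputable def zonal (N m : ℕ) (x ξ : EuclideanSpace ℝ (Fin N)) : ℝ :=
  if m = 0 then 1 else
    (N + 2 * m - 2 : ℝ) *
      ∑ k ∈ Finset.range (m / 2 + 1),
        (-1 : ℝ) ^ k *
          (∏ j ∈ Finset.range (m - k - 1), (N + 2 * j : ℝ)) /
            ((2 : ℝ) ^ k * (k.factorial : ℝ) * ((m - 2 * k).factorial : ℝ)) *
          (inner ℝ x ξ : ℝ) ^ (m - 2 * k) * ‖x‖ ^ (2 * k)

/-- The Gegenbauer polynomial `C_m^λ(t)`. -/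
noncomputable def gegenbauer (lam : ℝ) (m : ℕ) (t : ℝ) : ℝ :=
  ∑ k ∈ Finset.range (m / 2 + 1),
    (-1 : ℝ) ^ k * (ascPochhammer ℝ (m - k)).eval lam /
      ((k.factorial : ℝ) * ((m - 2 * k).factorial : ℝ)) * (2 * t) ^ (m - 2 * k)

/-- Fundamental solution `Γ(z) = 1/(ω_{N-1}(N-2)|z|^{N-2})` of `-Δ` in `ℝ^N`. -/
noncomputable def fundSol (N : ℕ) (z : EuclideanSpace ℝ (Fin N)) : ℝ :=
  1 / (sphereArea N * (N - 2 : ℝ) * ‖z‖ ^ (N - 2))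

/-- The coefficient `A_m(ρ)`. -/
noncomputable def Acoef (N : ℕ) (a : ℝ) (m : ℕ) (ρ : ℝ) : ℝ :=
  ((m + N - 2 : ℝ) / ((m : ℝ) * (2 * m + N - 2))) * (ρ ^ m / (a ^ (2 * m + N - 2) - 1)) *
    (1 + ((m : ℝ) / (m + N - 2)) * (a / ρ) ^ (2 * m + N - 2))

/-- The coefficient `B_m(ρ)`. -/
noncomputable def Bcoef (N : ℕ) (a : ℝ) (m : ℕ) (ρ : ℝ) : ℝ :=
  (a ^ (2 * m + N - 2) / (2 * m + N - 2 : ℝ)) * (ρ ^ m / (a ^ (2 * m + N - 2) - 1)) *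
    (1 + ((m : ℝ) / (m + N - 2)) * (ρ ^ (2 * m + N - 2))⁻¹)

/-- The constant `C_0`. -/
noncomputable def Czero (N : ℕ) (a : ℝ) : ℝ :=
  (1 / ((N - 2 : ℝ) * sphereArea N)) * (a ^ (N - 1) / (1 + a ^ (N - 1)))

/-- The regular part `H_a(x,y)` of the Neumann Green function of the annulus. -/
noncomputable def Hreg (N : ℕ) (a : ℝ) (x y : EuclideanSpace ℝ (Fin N)) : ℝ :=
  (1 / sphereArea N) *
      ∑' m : ℕ,
        (Acoef N a (m + 1) ‖x‖ * ‖y‖ ^ (m + 1) +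
            Bcoef N a (m + 1) ‖x‖ * (‖y‖ ^ (m + 1 + N - 2))⁻¹) *
          zonal N (m + 1) (‖x‖⁻¹ • x) (‖y‖⁻¹ • y) +
    Czero N a * (‖y‖ ^ (N - 2))⁻¹

/-- The Neumann Green function `G_a(x,y)` of the annulus. -/
noncomputable def GreenN (N : ℕ) (a : ℝ) (x y : EuclideanSpace ℝ (Fin N)) : ℝ :=
  1 / (sphereArea N * (N - 2 : ℝ) * ‖y - x‖ ^ (N - 2)) - Hreg N a x y

/-- The Laplacian of `f : ℝ^N → ℝ`, as the sum of the pure second partial derivatives. -/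
noncomputable def lap (N : ℕ) (f : EuclideanSpace ℝ (Fin N) → ℝ)
    (y : EuclideanSpace ℝ (Fin N)) : ℝ :=
  ∑ i : Fin N,
    iteratedFDeriv ℝ 2 f y ![EuclideanSpace.single i 1, EuclideanSpace.single i 1]

/-!
With `q = max (|x|, a/|x|) < 1`, both `A_m(|x|) |y|^m` and `B_m(|x|) |y|^{-(m+N-2)}` are
`O(q^m)`, so it suffices that zonal harmonics of unit vectors grow polynomially in `m`.
On unit vectors `Z_m(x, ξ) = (N+2m-2)/(N-2) · C_m^λ(x·ξ)` with `λ = (N-2)/2`. Writing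
`t = (z + w)/2` with `z w = 1`, `|z| = |w| = 1`, the factorization
`(1 - 2tX + X²)^{-λ} = (1 - zX)^{-λ} (1 - wX)^{-λ}` gives
`C_m^λ(t) = ∑_{i+j=m} c_i c_j z^i w^j` with `c_j = (λ)_j / j!`; it is proved by checking that
both sides satisfy the three-term recurrence of the Gegenbauer polynomials. Hence
`|C_m^λ(t)| ≤ ∑_{i+j=m} c_i c_j`, which is polynomial in `m`.
-/

open Finset

noncomputable def risingBinom (l : ℝ) (j : ℕ) : ℝ :=
  (ascPochhammer ℝ j).eval l / j.factorial

theorem risingBinom_zero (l : ℝ) : risingBinom l 0 = 1 := by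
  simp [risingBinom]

theorem succ_mul_risingBinom_succ (l : ℝ) (j : ℕ) :
    (j + 1) * risingBinom l (j + 1) = (l + j) * risingBinom l j := by
  rw [risingBinom, risingBinom, ascPochhammer_succ_eval, Nat.factorial_succ]
  push_cast
  field_simp

theorem risingBinom_one (l : ℝ) : risingBinom l 1 = l := by
  simpa [risingBinom_zero] using succ_mul_risingBinom_succ l 0

theorem risingBinom_pos {l : ℝ} (hl : 0 < l) (j : ℕ) : 0 < risingBinom l j :=
  div_pos (ascPochhammer_pos j l hl) (by positivity)

theorem add_mul_pow_le_mul_add_one_pow {x : ℝ} (hx : 0 ≤ x) (n : ℕ) :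
    (x + n) * x ^ n ≤ x * (x + 1) ^ n := by
  induction n with
  | zero => simp
  | succ n ih =>
    have hle : x ^ n ≤ (x + 1) ^ n := pow_le_pow_left₀ hx (by linarith) n
    push_cast
    calc (x + (n + 1)) * x ^ (n + 1) = x * ((x + n) * x ^ n) + x * x ^ n := by ring
      _ ≤ x * (x * (x + 1) ^ n) + x * (x + 1) ^ n := by gcongr
      _ = x * (x + 1) ^ (n + 1) := by ring

theorem risingBinom_le_pow {l : ℝ} {K : ℕ} (hl : 0 < l) (hlK : l ≤ K) (j : ℕ) :
    risingBinom l j ≤ (j + 1) ^ K := by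
  induction j with
  | zero => simp [risingBinom_zero]
  | succ j ih =>
    have hj : (0 : ℝ) < j + 1 := by positivity
    have step := add_mul_pow_le_mul_add_one_pow hj.le K
    refine le_of_mul_le_mul_left ?_ hj
    rw [succ_mul_risingBinom_succ]
    push_cast
    calc (l + j) * risingBinom l j ≤ (j + 1 + K) * (j + 1) ^ K :=
          mul_le_mul (by linarith) ih (risingBinom_pos hl j).le (by positivity)
      _ ≤ (j + 1) * (j + 1 + 1) ^ K := step

theorem sum_antidiagonal_mul_recurrence {R : Type*} [CommRing R] {l z w : R} {a b : ℕ → R}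
    (ha : ∀ j : ℕ, (j + 1 : R) * a (j + 1) = (l + j) * z * a j)
    (hb : ∀ j : ℕ, (j + 1 : R) * b (j + 1) = (l + j) * w * b j) (m : ℕ) :
    (m + 2 : R) * ∑ p ∈ antidiagonal (m + 2), a p.1 * b p.2 =
      (l + m + 1) * (z + w) * ∑ p ∈ antidiagonal (m + 1), a p.1 * b p.2 -
        (2 * l + m) * (z * w) * ∑ p ∈ antidiagonal m, a p.1 * b p.2 := by
  set S : ℕ → R := fun n => ∑ p ∈ antidiagonal n, a p.1 * b p.2
  set T₁ : ℕ → R := fun n => ∑ p ∈ antidiagonal n, (p.1 : R) * (a p.1 * b p.2)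
  set T₂ : ℕ → R := fun n => ∑ p ∈ antidiagonal n, (p.2 : R) * (a p.1 * b p.2)
  have hT₁ (n : ℕ) : T₁ (n + 1) = z * (l * S n + T₁ n) := by
    simp only [T₁, S, Nat.sum_antidiagonal_succ, mul_sum, ← sum_add_distrib, Nat.cast_zero,
      zero_mul, zero_add]
    refine sum_congr rfl fun p _ => ?_
    push_cast
    linear_combination b p.2 * ha p.1
  have hT₂ (n : ℕ) : T₂ (n + 1) = w * (l * S n + T₂ n) := by
    simp only [T₂, S, Nat.sum_antidiagonal_succ', mul_sum, ← sum_add_distrib, Nat.cast_zero,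
      zero_mul, zero_add]
    refine sum_congr rfl fun p _ => ?_
    push_cast
    linear_combination a p.1 * hb p.2
  have hT (n : ℕ) : T₁ n + T₂ n = n * S n := by
    simp only [T₁, T₂, S, mul_sum, ← sum_add_distrib]
    refine sum_congr rfl fun p hp => ?_
    rw [← (mem_antidiagonal.mp hp)]
    push_cast
    ring
  change (m + 2 : R) * S (m + 2) = (l + m + 1) * (z + w) * S (m + 1) - (2 * l + m) * (z * w) * S m
  have h₂ := hT (m + 2)
  have h₁ := hT (m + 1)
  push_cast at h₁ h₂
  linear_combination -h₂ + hT₁ (m + 1) + hT₂ (m + 1) + (z + w) * h₁ - w * hT₁ m - z * hT₂ m -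
    z * w * hT m

noncomputable def gegenbauerCoeff (l : ℝ) (m k : ℕ) : ℝ :=
  if 2 * k ≤ m then
    (-1) ^ k * (ascPochhammer ℝ (m - k)).eval l / (k.factorial * (m - 2 * k).factorial)
  else 0

theorem gegenbauerCoeff_of_lt {l : ℝ} {m k : ℕ} (h : m < 2 * k) : gegenbauerCoeff l m k = 0 :=
  if_neg (by omega)

theorem gegenbauerCoeff_zero (l : ℝ) (m : ℕ) : gegenbauerCoeff l m 0 = risingBinom l m := by
  simp [gegenbauerCoeff, risingBinom]

theorem gegenbauerCoeff_two_mul_add (l : ℝ) (k r : ℕ) :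
    gegenbauerCoeff l (2 * k + r) k =
      (-1) ^ k * (ascPochhammer ℝ (k + r)).eval l / (k.factorial * r.factorial) := by
  rw [gegenbauerCoeff, if_pos (by omega), show 2 * k + r - k = k + r by omega,
    show 2 * k + r - 2 * k = r by omega]

theorem gegenbauerCoeff_mul_pow_succ (l : ℝ) (m k : ℕ) (u : ℝ) :
    gegenbauerCoeff l m k * u ^ (m - 2 * k) * u = gegenbauerCoeff l m k * u ^ (m + 1 - 2 * k) := by
  rcases lt_or_ge m (2 * k) with h | h
  · simp [gegenbauerCoeff_of_lt h]
  · rw [mul_assoc, ← pow_succ, show m - 2 * k + 1 = m + 1 - 2 * k by omega]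

theorem gegenbauer_eq_sum_range (l : ℝ) {m M : ℕ} (hM : m / 2 < M) (t : ℝ) :
    gegenbauer l m t = ∑ k ∈ range M, gegenbauerCoeff l m k * (2 * t) ^ (m - 2 * k) := by
  rw [gegenbauer, ← sum_subset (range_subset_range.mpr (show m / 2 + 1 ≤ M by omega))]
  · refine sum_congr rfl fun k hk => ?_
    rw [gegenbauerCoeff, if_pos (by rw [mem_range] at hk; omega)]
  · intro k _ hk
    rw [gegenbauerCoeff_of_lt (by rw [mem_range] at hk; omega), zero_mul]

theorem gegenbauerCoeff_succ_recurrence (l : ℝ) (m k : ℕ) :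
    (m + 2) * gegenbauerCoeff l (m + 2) (k + 1) =
      (l + m + 1) * gegenbauerCoeff l (m + 1) (k + 1) - (2 * l + m) * gegenbauerCoeff l m k := by
  have hfac (n : ℕ) : ((n + 1).factorial : ℝ) = (n + 1) * n.factorial := by
    push_cast [Nat.factorial_succ]; ring
  rcases lt_trichotomy m (2 * k) with h | rfl | h
  · simp [gegenbauerCoeff_of_lt, h, show m + 1 < 2 * (k + 1) by omega,
      show m + 2 < 2 * (k + 1) by omega]
  · have h₂ := gegenbauerCoeff_two_mul_add l (k + 1) 0
    have h₀ := gegenbauerCoeff_two_mul_add l k 0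
    simp only [add_zero, Nat.factorial_zero, Nat.cast_one, mul_one] at h₂ h₀
    rw [gegenbauerCoeff_of_lt (by omega : 2 * k + 1 < 2 * (k + 1)),
      show 2 * k + 2 = 2 * (k + 1) by ring, h₂, h₀, ascPochhammer_succ_eval, hfac, pow_succ]
    push_cast
    field_simp
    ring
  · obtain ⟨r, rfl⟩ : ∃ r, m = 2 * k + (r + 1) := ⟨m - 2 * k - 1, by omega⟩
    rw [show 2 * k + (r + 1) + 2 = 2 * (k + 1) + (r + 1) by ring,
      show 2 * k + (r + 1) + 1 = 2 * (k + 1) + r by ring, gegenbauerCoeff_two_mul_add,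
      gegenbauerCoeff_two_mul_add, gegenbauerCoeff_two_mul_add,
      show k + 1 + (r + 1) = k + r + 1 + 1 by ring, show k + 1 + r = k + r + 1 by ring,
      show k + (r + 1) = k + r + 1 by ring, ascPochhammer_succ_eval (k + r + 1), hfac k, hfac r]
    push_cast
    field_simp
    ring

theorem gegenbauer_zero (l t : ℝ) : gegenbauer l 0 t = 1 := by
  simp [gegenbauer]

theorem gegenbauer_one (l t : ℝ) : gegenbauer l 1 t = l * (2 * t) := by
  simp [gegenbauer]

theorem gegenbauer_succ_succ (l : ℝ) (m : ℕ) (t : ℝ) :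
    (m + 2) * gegenbauer l (m + 2) t =
      2 * (l + m + 1) * t * gegenbauer l (m + 1) t - (2 * l + m) * gegenbauer l m t := by
  have hL : gegenbauer l (m + 2) t = ∑ k ∈ range (m + 1), gegenbauerCoeff l (m + 2) (k + 1) *
      (2 * t) ^ (m - 2 * k) + gegenbauerCoeff l (m + 2) 0 * (2 * t) ^ (m + 2) := by
    rw [gegenbauer_eq_sum_range l (by omega : (m + 2) / 2 < m + 2), sum_range_succ']
    simp only [show ∀ k, m + 2 - 2 * (k + 1) = m - 2 * k by omega, mul_zero, Nat.sub_zero]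
  have hM : 2 * t * gegenbauer l (m + 1) t = ∑ k ∈ range (m + 1),
      gegenbauerCoeff l (m + 1) (k + 1) * (2 * t) ^ (m - 2 * k) +
        gegenbauerCoeff l (m + 1) 0 * (2 * t) ^ (m + 2) := by
    rw [gegenbauer_eq_sum_range l (by omega : (m + 1) / 2 < m + 2), sum_range_succ', mul_add,
      mul_sum]
    simp only [mul_comm (2 * t), gegenbauerCoeff_mul_pow_succ,
      show ∀ k, m + 1 + 1 - 2 * (k + 1) = m - 2 * k by omega, mul_zero, Nat.sub_zero]
    rw [mul_assoc, ← pow_succ]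
  have hS := gegenbauer_eq_sum_range l (by omega : m / 2 < m + 1) t
  have h₀ := succ_mul_risingBinom_succ l (m + 1)
  push_cast at h₀
  rw [show 2 * (l + m + 1) * t = (l + m + 1) * (2 * t) by ring, mul_assoc, hM, hL, hS,
    gegenbauerCoeff_zero, gegenbauerCoeff_zero, mul_add, mul_add, mul_sum, mul_sum, mul_sum]
  simp only [← mul_assoc, gegenbauerCoeff_succ_recurrence, sub_mul, sum_sub_distrib]
  linear_combination (2 * t) ^ (m + 2) * h₀

theorem gegenbauer_eq_sum_antidiagonal (l t : ℝ) {z w : ℂ} (hzw : z * w = 1)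
    (hzw' : z + w = 2 * t) (m : ℕ) :
    (gegenbauer l m t : ℂ) =
      ∑ p ∈ antidiagonal m, (risingBinom l p.1 * z ^ p.1) * (risingBinom l p.2 * w ^ p.2) := by
  have hrec (v : ℂ) (j : ℕ) : (j + 1 : ℂ) * (risingBinom l (j + 1) * v ^ (j + 1)) =
      (l + j) * v * (risingBinom l j * v ^ j) := by
    have := congrArg (fun x : ℝ => (x : ℂ)) (succ_mul_risingBinom_succ l j)
    push_cast at this
    linear_combination v ^ (j + 1) * this
  induction m using Nat.twoStepInduction with
  | zero => simp [gegenbauer_zero, risingBinom_zero]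
  | one =>
    simp only [gegenbauer_one, Nat.sum_antidiagonal_succ, HasAntidiagonal.antidiagonal_zero,
      sum_singleton, zero_add, risingBinom_zero, risingBinom_one]
    push_cast
    linear_combination (-l : ℂ) * hzw'
  | more n ih₀ ih₁ =>
    have hn : (n + 2 : ℂ) ≠ 0 := by exact_mod_cast (Nat.succ_ne_zero (n + 1))
    have hC := congrArg (fun x : ℝ => (x : ℂ)) (gegenbauer_succ_succ l n t)
    push_cast at hC
    apply mul_left_cancel₀ hn
    rw [hC, ih₀, ih₁, sum_antidiagonal_mul_recurrence (a := fun j => risingBinom l j * z ^ j)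
      (b := fun j => risingBinom l j * w ^ j) (hrec z) (hrec w), hzw, hzw']
    ring

theorem abs_gegenbauer_le (l : ℝ) {t : ℝ} (ht : |t| ≤ 1) (m : ℕ) :
    |gegenbauer l m t| ≤ ∑ p ∈ antidiagonal m, |risingBinom l p.1| * |risingBinom l p.2| := by
  set z : ℂ := ⟨t, √(1 - t ^ 2)⟩
  have hsq : √(1 - t ^ 2) ^ 2 = 1 - t ^ 2 := Real.sq_sqrt (by nlinarith [abs_le.mp ht])
  have hz : Complex.normSq z = 1 := by
    rw [Complex.normSq_mk]
    linear_combination hsq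
  have hnorm : ‖z‖ = 1 := by rw [Complex.norm_def, hz, Real.sqrt_one]
  have hzw : z * (starRingEnd ℂ) z = 1 := by rw [Complex.mul_conj, hz, Complex.ofReal_one]
  have hzw' : z + (starRingEnd ℂ) z = 2 * t := by rw [Complex.add_conj]; push_cast; rfl
  rw [← Real.norm_eq_abs, ← Complex.norm_real, gegenbauer_eq_sum_antidiagonal l t hzw hzw']
  refine (norm_sum_le _ _).trans (sum_le_sum fun p _ => ?_)
  simp [hnorm]

theorem abs_gegenbauer_le_pow {l t : ℝ} {K : ℕ} (hl : 0 < l) (hlK : l ≤ K) (ht : |t| ≤ 1)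
    (m : ℕ) : |gegenbauer l m t| ≤ (m + 1) ^ (2 * K + 1) := by
  have hbound (i : ℕ) (hi : i ≤ m) : |risingBinom l i| ≤ (m + 1) ^ K := by
    rw [abs_of_pos (risingBinom_pos hl i)]
    refine (risingBinom_le_pow hl hlK i).trans (pow_le_pow_left₀ (by positivity) ?_ K)
    exact_mod_cast Nat.succ_le_succ hi
  calc |gegenbauer l m t| ≤ ∑ p ∈ antidiagonal m, |risingBinom l p.1| * |risingBinom l p.2| :=
        abs_gegenbauer_le l ht m
    _ ≤ ∑ p ∈ antidiagonal m, ((m + 1 : ℝ) ^ K * (m + 1) ^ K) := by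
        refine sum_le_sum fun p hp => ?_
        have hp := mem_antidiagonal.mp hp
        exact mul_le_mul (hbound _ (by omega)) (hbound _ (by omega)) (abs_nonneg _)
          (by positivity)
    _ = (m + 1) ^ (2 * K + 1) := by
        rw [sum_const, Nat.card_antidiagonal, nsmul_eq_mul]
        push_cast
        ring

theorem sub_two_mul_prod_range (c : ℝ) (n : ℕ) :
    (c - 2) * ∏ j ∈ range n, (c + 2 * j) =
      2 ^ (n + 1) * (ascPochhammer ℝ (n + 1)).eval ((c - 2) / 2) := by
  induction n with
  | zero =>
    simp only [range_zero, prod_empty, zero_add, ascPochhammer_one, Polynomial.eval_X]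
    ring
  | succ n ih =>
    rw [prod_range_succ, ← mul_assoc, ih, ascPochhammer_succ_eval (n + 1)]
    push_cast
    ring

theorem zonal_eq_gegenbauer {N m : ℕ} (hN : N ≠ 2) (hm : m ≠ 0) {x : EuclideanSpace ℝ (Fin N)}
    (hx : ‖x‖ = 1) (ξ : EuclideanSpace ℝ (Fin N)) :
    zonal N m x ξ = (N + 2 * m - 2) / (N - 2) * gegenbauer ((N - 2) / 2) m (inner ℝ x ξ) := by
  have hN2 : (N : ℝ) - 2 ≠ 0 := sub_ne_zero.mpr (by exact_mod_cast hN)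
  rw [zonal, if_neg hm, gegenbauer, hx, div_mul_eq_mul_div, eq_div_iff hN2, mul_assoc]
  congr 1
  rw [sum_mul]
  refine sum_congr rfl fun k hk => ?_
  obtain ⟨n, hn⟩ : ∃ n, m - k = n + 1 := ⟨m - k - 1, by rw [mem_range] at hk; omega⟩
  have hP := sub_two_mul_prod_range N n
  rw [show (2 : ℝ) ^ (n + 1) = 2 ^ k * 2 ^ (m - 2 * k) by
    rw [← pow_add]; congr 1; rw [mem_range] at hk; omega] at hP
  rw [show m - k - 1 = n by omega, hn, one_pow, mul_one, mul_pow, ← sub_eq_zero]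
  field_simp
  linear_combination (-1) ^ k * (inner ℝ x ξ) ^ (m - 2 * k) * hP

theorem abs_div_pow_sub_one_le {a b : ℝ} {E : ℕ} (ha0 : 0 < a) (ha1 : a < 1) (hE : E ≠ 0)
    (hb : 0 ≤ b) : |b / (a ^ E - 1)| ≤ b / (1 - a) := by
  have haE : a ^ E ≤ a := pow_le_of_le_one ha0.le ha1.le hE
  rw [abs_div, abs_of_nonneg hb, abs_of_neg (by linarith), neg_sub]
  gcongr

theorem abs_Acoef_le {N m : ℕ} {a ρ : ℝ} (hN : 2 ≤ N) (hm : m ≠ 0) (ha0 : 0 < a) (ha1 : a < 1)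
    (haρ : a ≤ ρ) : |Acoef N a m ρ| ≤ 2 / (1 - a) * ρ ^ m := by
  obtain ⟨n, rfl⟩ : ∃ n, N = n + 2 := ⟨N - 2, by omega⟩
  have hρ : 0 < ρ := ha0.trans_le haρ
  have hm1 : (1 : ℝ) ≤ m := by exact_mod_cast Nat.one_le_iff_ne_zero.mpr hm
  have hn : (0 : ℝ) ≤ n := n.cast_nonneg
  have hpow : (a / ρ) ^ (2 * m + n) ≤ 1 := pow_le_one₀ (by positivity) ((div_le_one hρ).mpr haρ)
  have hfrac : |(m + n : ℝ) / (m * (2 * m + n))| ≤ 1 := by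
    rw [abs_of_nonneg (by positivity), div_le_one (by positivity)]
    nlinarith
  have hcorr : |1 + m / (m + n : ℝ) * (a / ρ) ^ (2 * m + n)| ≤ 2 := by
    have hq : m / (m + n : ℝ) ≤ 1 := (div_le_one (by positivity)).mpr (by linarith)
    rw [abs_of_nonneg (by positivity)]
    nlinarith [div_nonneg (m.cast_nonneg (α := ℝ)) (by positivity : (0 : ℝ) ≤ m + n)]
  rw [Acoef, show 2 * m + (n + 2) - 2 = 2 * m + n by omega]
  push_cast
  rw [show (m : ℝ) + (n + 2) - 2 = m + n by ring,
    show 2 * (m : ℝ) + (n + 2) - 2 = 2 * m + n by ring,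
    abs_mul, abs_mul]
  calc _ ≤ 1 * (ρ ^ m / (1 - a)) * 2 := by
        gcongr
        exact abs_div_pow_sub_one_le ha0 ha1 (by omega) (by positivity)
    _ = 2 / (1 - a) * ρ ^ m := by ring

theorem abs_Bcoef_mul_inv_pow_le {N m : ℕ} {a ρ r : ℝ} (hN : 2 ≤ N) (hm : m ≠ 0) (ha0 : 0 < a)
    (ha1 : a < 1) (haρ : a ≤ ρ) (hρ1 : ρ ≤ 1) (har : a ≤ r) :
    |Bcoef N a m ρ * (r ^ (m + N - 2))⁻¹| ≤ 2 / ((1 - a) * a ^ (N - 2)) * (a / ρ) ^ m := by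
  obtain ⟨n, rfl⟩ : ∃ n, N = n + 2 := ⟨N - 2, by omega⟩
  have hρ : 0 < ρ := ha0.trans_le haρ
  have hm1 : (1 : ℝ) ≤ m := by exact_mod_cast Nat.one_le_iff_ne_zero.mpr hm
  have hn : (0 : ℝ) ≤ n := n.cast_nonneg
  have hfrac : |a ^ (2 * m + n) / (2 * m + n : ℝ)| ≤ a ^ (2 * m + n) := by
    rw [abs_of_nonneg (by positivity)]
    exact div_le_self (by positivity) (by linarith)
  have hcorr : |1 + m / (m + n : ℝ) * (ρ ^ (2 * m + n))⁻¹| ≤ 2 * (ρ ^ (2 * m + n))⁻¹ := by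
    have hq : m / (m + n : ℝ) ≤ 1 := (div_le_one (by positivity)).mpr (by linarith)
    have hinv : 1 ≤ (ρ ^ (2 * m + n))⁻¹ :=
      (one_le_inv₀ (by positivity)).mpr (pow_le_one₀ hρ.le hρ1)
    rw [abs_of_nonneg (by positivity)]
    nlinarith [div_nonneg (m.cast_nonneg (α := ℝ)) (by positivity : (0 : ℝ) ≤ m + n)]
  have hr : |(r ^ (m + n))⁻¹| ≤ (a ^ (m + n))⁻¹ := by
    have hr : 0 < r := ha0.trans_le har
    rw [abs_of_nonneg (by positivity)]
    gcongr
  rw [Bcoef, show 2 * m + (n + 2) - 2 = 2 * m + n by omega, show m + (n + 2) - 2 = m + n by omega,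
    Nat.add_sub_cancel]
  push_cast
  rw [show (m : ℝ) + (n + 2) - 2 = m + n by ring,
    show 2 * (m : ℝ) + (n + 2) - 2 = 2 * m + n by ring,
    abs_mul, abs_mul, abs_mul]
  calc _ ≤ a ^ (2 * m + n) * (ρ ^ m / (1 - a)) * (2 * (ρ ^ (2 * m + n))⁻¹) * (a ^ (m + n))⁻¹ := by
        gcongr
        exact abs_div_pow_sub_one_le ha0 ha1 (by omega) (by positivity)
    _ = 2 / ((1 - a) * ρ ^ n) * (a / ρ) ^ m := by
        rw [show 2 * m + n = m + (m + n) by ring, div_pow]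
        simp only [pow_add]
        field_simp
    _ ≤ 2 / ((1 - a) * a ^ n) * (a / ρ) ^ m := by
        gcongr

theorem abs_zonal_le {N : ℕ} (hN : 3 ≤ N) {x ξ : EuclideanSpace ℝ (Fin N)} (hx : ‖x‖ = 1)
    (hξ : ‖ξ‖ = 1) (m : ℕ) : |zonal N m x ξ| ≤ N * (m + 1) ^ (2 * N + 2) := by
  have hN3 : (3 : ℝ) ≤ N := by exact_mod_cast hN
  rcases eq_or_ne m 0 with rfl | hm
  · rw [zonal, if_pos rfl, abs_one, Nat.cast_zero, zero_add, one_pow, mul_one]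
    linarith
  have hm1 : (1 : ℝ) ≤ m := by exact_mod_cast Nat.one_le_iff_ne_zero.mpr hm
  have ht : |inner ℝ x ξ| ≤ 1 := (abs_real_inner_le_norm x ξ).trans (by rw [hx, hξ, one_mul])
  have hG := abs_gegenbauer_le_pow (K := N) (by linarith : (0 : ℝ) < (N - 2) / 2) (by linarith) ht m
  have hfac : (N + 2 * m - 2) / (N - 2 : ℝ) ≤ N * (m + 1) := by
    have : (N : ℝ) * (m + 1) ≤ N * (m + 1) * (N - 2) :=
      le_mul_of_one_le_right (by positivity) (by linarith)
    rw [div_le_iff₀ (by linarith)]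
    nlinarith
  rw [zonal_eq_gegenbauer (by omega) hm hx, abs_mul, abs_of_nonneg (by
    apply div_nonneg <;> linarith)]
  calc _ ≤ (N * (m + 1)) * ((m + 1) ^ (2 * N + 1) : ℝ) :=
        mul_le_mul hfac hG (abs_nonneg _) (by positivity)
    _ = N * (m + 1) ^ (2 * N + 2) := by ring

theorem abs_Acoef_mul_pow_add_Bcoef_mul_inv_pow_le {N m : ℕ} {a ρ r : ℝ} (hN : 2 ≤ N) (hm : m ≠ 0)
    (ha0 : 0 < a) (ha1 : a < 1) (haρ : a ≤ ρ) (hρ1 : ρ ≤ 1) (har : a ≤ r) (hr1 : r ≤ 1) :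
    |Acoef N a m ρ * r ^ m + Bcoef N a m ρ * (r ^ (m + N - 2))⁻¹| ≤
      (2 / (1 - a) + 2 / ((1 - a) * a ^ (N - 2))) * max ρ (a / ρ) ^ m := by
  have hρ : 0 < ρ := ha0.trans_le haρ
  have hr : 0 ≤ r := ha0.le.trans har
  have h1a : 0 < 1 - a := by linarith
  have hA : |Acoef N a m ρ * r ^ m| ≤ 2 / (1 - a) * max ρ (a / ρ) ^ m := by
    rw [abs_mul, abs_of_nonneg (pow_nonneg hr m)]
    calc _ ≤ 2 / (1 - a) * ρ ^ m * 1 :=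
          mul_le_mul (abs_Acoef_le hN hm ha0 ha1 haρ) (pow_le_one₀ hr hr1) (by positivity)
            (by positivity)
      _ ≤ 2 / (1 - a) * max ρ (a / ρ) ^ m := by
          rw [mul_one]
          gcongr
          exact le_max_left _ _
  have hB : |Bcoef N a m ρ * (r ^ (m + N - 2))⁻¹| ≤
      2 / ((1 - a) * a ^ (N - 2)) * max ρ (a / ρ) ^ m := by
    refine (abs_Bcoef_mul_inv_pow_le hN hm ha0 ha1 haρ hρ1 har).trans ?_
    gcongr
    exact le_max_right _ _
  linarith [abs_add_le (Acoef N a m ρ * r ^ m) (Bcoef N a m ρ * (r ^ (m + N - 2))⁻¹)]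

/-- absolute convergence of the series defining the regular part `H_a(x,y)`. -/
theorem stmt12 (N : ℕ) (hN : 3 ≤ N) (a : ℝ) (ha0 : 0 < a) (ha1 : a < 1)
    (x y : EuclideanSpace ℝ (Fin N)) (hax : a < ‖x‖) (hx1 : ‖x‖ < 1)
    (hay : a ≤ ‖y‖) (hy1 : ‖y‖ ≤ 1) :
    Summable (fun m : ℕ =>
      |(Acoef N a (m + 1) ‖x‖ * ‖y‖ ^ (m + 1) +
          Bcoef N a (m + 1) ‖x‖ * (‖y‖ ^ (m + 1 + N - 2))⁻¹) *
        zonal N (m + 1) (‖x‖⁻¹ • x) (‖y‖⁻¹ • y)|) := by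
  have hx0 : 0 < ‖x‖ := ha0.trans hax
  set q := max ‖x‖ (a / ‖x‖)
  set C := 2 / (1 - a) + 2 / ((1 - a) * a ^ (N - 2))
  have hq0 : 0 < q := hx0.trans_le (le_max_left _ _)
  have hq1 : q < 1 := max_lt hx1 ((div_lt_one hx0).mpr hax)
  have hunit {v : EuclideanSpace ℝ (Fin N)} (hv : 0 < ‖v‖) : ‖‖v‖⁻¹ • v‖ = 1 :=
    norm_smul_inv_norm (norm_pos_iff.mp hv)
  have hgeom : Summable fun m : ℕ => ((m + 2 : ℕ) : ℝ) ^ (2 * N + 2) * q ^ (m + 2) :=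
    (summable_nat_add_iff (f := fun n : ℕ => (n : ℝ) ^ (2 * N + 2) * q ^ n) 2).mpr
      (summable_pow_mul_geometric_of_norm_lt_one _ (by rwa [Real.norm_of_nonneg hq0.le]))
  refine (hgeom.mul_left (C * N / q)).of_nonneg_of_le (fun m => abs_nonneg _) fun m => ?_
  rw [abs_mul]
  calc _ ≤ C * q ^ (m + 1) * (N * ((m + 1 : ℕ) + 1 : ℝ) ^ (2 * N + 2)) :=
        mul_le_mul (abs_Acoef_mul_pow_add_Bcoef_mul_inv_pow_le (by omega) (by omega) ha0 ha1
            hax.le hx1.le hay hy1)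
          (abs_zonal_le hN (hunit hx0) (hunit (ha0.trans_le hay)) (m + 1)) (abs_nonneg _)
          (by positivity)
    _ = C * N / q * (((m + 2 : ℕ) : ℝ) ^ (2 * N + 2) * q ^ (m + 2)) := by
        push_cast
        field_simp
        ring
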